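/- Let Z be a compact metric space, L a positive bounded linear operator on C(Z,ℝ) with positive maximal eigenvalue Λ and strictly positive eigenfunction h, and suppose the normalized operator L̃ G = Λ^{−1} h^{−1} L(hG) satisfies L̃ⁿ G → c(G)·𝟙 uniformly for every continuous G, where c(G) is a constant. Then there exists a unique Borel probability measure μ₀ with L̃* μ₀ = μ₀, and for every g ∈ C(Z,ℝ), the sequence Λ^{−n} Lⁿ g converges uniformly to h · ∫ (g/h) dμ₀. -/

import Mathlib

/-!
Conjugating by multiplication with the eigenfunction `h` gives
`Λ⁻ⁿ Lⁿ (h G) = h · L̃ⁿ G`, so everything reduces to the normalized operator `L̃`.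
Since `L̃ⁿ G → c(G)` uniformly, the limit `c` is a positive linear functional with `c 𝟙 = 1`
and `c ∘ L̃ = c`; by Riesz–Markov–Kakutani it is integration against a probability measure `μ₀`,
which is therefore `L̃*`-invariant. Conversely, integrating `L̃ⁿ G → c(G)` against any
`L̃*`-invariant probability measure shows that it also represents `c`, hence equals `μ₀`.
-/

open MeasureTheory Filter Topology

open scoped CompactlySupported

section Measures

variable {Z : Type*} [TopologicalSpace Z] [MeasurableSpace Z] [BorelSpace Z]

def PositiveLinearMap.restrictCompactlySupported (φ : C(Z, ℝ) →ₚ[ℝ] ℝ) :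
    C_c(Z, ℝ) →ₚ[ℝ] ℝ where
  toFun f := φ f
  map_add' f g := φ.map_add f g
  map_smul' r f := φ.map_smul r f
  monotone' _ _ hfg := φ.monotone' hfg

lemma exists_probabilityMeasure_integral_eq [CompactSpace Z] [T2Space Z]
    (φ : C(Z, ℝ) →ₚ[ℝ] ℝ) (hφ : φ 1 = 1) :
    ∃ μ : ProbabilityMeasure Z, ∀ G : C(Z, ℝ), ∫ z, G z ∂(μ : Measure Z) = φ G := by
  let μ := RealRMK.rieszMeasure φ.restrictCompactlySupported
  have hμ (G : C(Z, ℝ)) : ∫ z, G z ∂μ = φ G :=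
    RealRMK.integral_rieszMeasure _ (CompactlySupportedContinuousMap.continuousMapEquiv G)
  have : IsProbabilityMeasure μ := isProbabilityMeasure_iff_real.2 (by simpa [hφ] using hμ 1)
  exact ⟨⟨μ, this⟩, hμ⟩

lemma ContinuousMap.continuous_integral [CompactSpace Z] (μ : Measure Z) [IsFiniteMeasure μ] :
    Continuous fun G : C(Z, ℝ) ↦ ∫ z, G z ∂μ := by
  have h : (fun G : C(Z, ℝ) ↦ ∫ z, G z ∂μ) = fun G ↦ ∫ z, toLp 1 μ ℝ G z ∂μ :=
    funext fun G ↦ integral_congr_ae (coeFn_toLp μ G).symm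
  rw [h]
  exact MeasureTheory.continuous_integral.comp (toLp 1 μ ℝ).continuous

lemma MeasureTheory.ProbabilityMeasure.ext_of_forall_integral_continuousMap_eq
    [HasOuterApproxClosed Z] {μ ν : ProbabilityMeasure Z}
    (h : ∀ G : C(Z, ℝ), ∫ z, G z ∂(μ : Measure Z) = ∫ z, G z ∂(ν : Measure Z)) : μ = ν :=
  toMeasure_injective <| ext_of_forall_integral_eq_of_IsFiniteMeasure fun f ↦ h f.toContinuousMap

end Measures

section Iterates

variable {Z : Type*} [TopologicalSpace Z] {T : C(Z, ℝ) →L[ℝ] C(Z, ℝ)} {c : C(Z, ℝ) → ℝ}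

lemma iterate_nonneg (hT : ∀ G, 0 ≤ G → 0 ≤ T G) (n : ℕ) {G : C(Z, ℝ)} (hG : 0 ≤ G) :
    0 ≤ (T ^ n) G := by
  induction n with
  | zero => exact hG
  | succ n ih => rw [pow_succ']; exact hT _ ih

lemma tendsto_iterate_apply
    (hconv : ∀ G, Tendsto (fun n ↦ (T ^ n) G) atTop (𝓝 (ContinuousMap.const Z (c G))))
    (G : C(Z, ℝ)) (z : Z) : Tendsto (fun n ↦ (T ^ n) G z) atTop (𝓝 (c G)) :=
  ((continuous_eval_const z).tendsto _).comp (hconv G)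

lemma apply_map_eq_of_tendsto_iterate [Nonempty Z]
    (hconv : ∀ G, Tendsto (fun n ↦ (T ^ n) G) atTop (𝓝 (ContinuousMap.const Z (c G))))
    (G : C(Z, ℝ)) : c (T G) = c G := by
  obtain ⟨z⟩ := ‹Nonempty Z›
  refine tendsto_nhds_unique (tendsto_iterate_apply hconv (T G) z) ?_
  simpa only [Function.comp_def, pow_succ, mul_apply_eq_comp] using
    (tendsto_iterate_apply hconv G z).comp (tendsto_add_atTop_nat 1)

lemma apply_one_of_tendsto_iterate [Nonempty Z]
    (hconv : ∀ G, Tendsto (fun n ↦ (T ^ n) G) atTop (𝓝 (ContinuousMap.const Z (c G))))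
    (hT1 : T 1 = 1) : c 1 = 1 := by
  obtain ⟨z⟩ := ‹Nonempty Z›
  have hpow (n : ℕ) : (T ^ n) 1 = 1 := by
    induction n with
    | zero => rfl
    | succ n ih => rw [pow_succ', mul_apply_eq_comp, ih, hT1]
  have h1 := tendsto_iterate_apply hconv 1 z
  simp only [hpow, ContinuousMap.one_apply] at h1
  exact tendsto_nhds_unique h1 tendsto_const_nhds

lemma exists_positiveLinearMap_coe_eq_of_tendsto_iterate [Nonempty Z]
    (hconv : ∀ G, Tendsto (fun n ↦ (T ^ n) G) atTop (𝓝 (ContinuousMap.const Z (c G))))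
    (hT : ∀ G, 0 ≤ G → 0 ≤ T G) : ∃ φ : C(Z, ℝ) →ₚ[ℝ] ℝ, ⇑φ = c := by
  obtain ⟨z⟩ := ‹Nonempty Z›
  let φ : C(Z, ℝ) →ₗ[ℝ] ℝ := linearMapOfTendsto (l := atTop) c
    (fun n ↦ ((ContinuousMap.evalCLM ℝ z).comp (T ^ n)).toLinearMap)
    (tendsto_pi_nhds.2 fun G ↦ tendsto_iterate_apply hconv G z)
  exact ⟨.mk₀ φ fun G hG ↦ ge_of_tendsto' (tendsto_iterate_apply hconv G z)
    fun n ↦ iterate_nonneg hT n hG z, rfl⟩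

lemma exists_probabilityMeasure_integral_eq_of_tendsto_iterate [CompactSpace Z] [T2Space Z]
    [MeasurableSpace Z] [BorelSpace Z] [Nonempty Z]
    (hconv : ∀ G, Tendsto (fun n ↦ (T ^ n) G) atTop (𝓝 (ContinuousMap.const Z (c G))))
    (hT : ∀ G, 0 ≤ G → 0 ≤ T G) (hT1 : T 1 = 1) :
    ∃ μ : ProbabilityMeasure Z, ∀ G : C(Z, ℝ), ∫ z, G z ∂(μ : Measure Z) = c G := by
  obtain ⟨φ, rfl⟩ := exists_positiveLinearMap_coe_eq_of_tendsto_iterate hconv hT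
  exact exists_probabilityMeasure_integral_eq φ (apply_one_of_tendsto_iterate hconv hT1)

lemma integral_eq_of_tendsto_iterate_of_integral_map_eq [CompactSpace Z] [MeasurableSpace Z]
    [BorelSpace Z] {μ : ProbabilityMeasure Z}
    (hconv : ∀ G, Tendsto (fun n ↦ (T ^ n) G) atTop (𝓝 (ContinuousMap.const Z (c G))))
    (hμ : ∀ G, ∫ z, T G z ∂(μ : Measure Z) = ∫ z, G z ∂(μ : Measure Z)) (G : C(Z, ℝ)) :
    ∫ z, G z ∂(μ : Measure Z) = c G := by
  have hpow (n : ℕ) : ∫ z, (T ^ n) G z ∂(μ : Measure Z) = ∫ z, G z ∂(μ : Measure Z) := by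
    induction n with
    | zero => rfl
    | succ n ih => rw [pow_succ', mul_apply_eq_comp, hμ, ih]
  have hlim := ((ContinuousMap.continuous_integral (μ : Measure Z)).tendsto _).comp (hconv G)
  simp only [Function.comp_def, hpow, ContinuousMap.const_apply, integral_const, probReal_univ,
    smul_eq_mul, one_mul] at hlim
  exact tendsto_nhds_unique tendsto_const_nhds hlim

end Iterates

section Normalization

variable {Z : Type*} [TopologicalSpace Z] {L Lt : C(Z, ℝ) →L[ℝ] C(Z, ℝ)} {Λ : ℝ} {h : C(Z, ℝ)}

lemma normalized_nonneg (hpos : ∀ G : C(Z, ℝ), (∀ z, 0 ≤ G z) → ∀ z, 0 ≤ (L G) z)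
    (hΛ : 0 < Λ) (hh : ∀ z, 0 < h z)
    (hLt : ∀ (G : C(Z, ℝ)) (z : Z), Lt G z = Λ⁻¹ * ((L (h * G)) z / h z))
    {G : C(Z, ℝ)} (hG : 0 ≤ G) : 0 ≤ Lt G := fun z ↦ by
  change 0 ≤ Lt G z
  rw [hLt]
  have hLhG : 0 ≤ L (h * G) z := hpos _ (fun w ↦ mul_nonneg (hh w).le (hG w)) z
  exact mul_nonneg (inv_nonneg.2 hΛ.le) (div_nonneg hLhG (hh z).le)

lemma map_mul_eq_smul_mul_normalized (hΛ : Λ ≠ 0) (hh : ∀ z, h z ≠ 0)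
    (hLt : ∀ (G : C(Z, ℝ)) (z : Z), Lt G z = Λ⁻¹ * ((L (h * G)) z / h z)) (G : C(Z, ℝ)) :
    L (h * G) = Λ • (h * Lt G) := by
  ext z
  simp only [ContinuousMap.smul_apply, ContinuousMap.mul_apply, smul_eq_mul, hLt]
  field_simp [hΛ, hh z]

lemma inv_pow_smul_pow_apply_mul [CompactSpace Z] (hΛ : Λ ≠ 0) (hh : ∀ z, h z ≠ 0)
    (hLt : ∀ (G : C(Z, ℝ)) (z : Z), Lt G z = Λ⁻¹ * ((L (h * G)) z / h z)) (n : ℕ)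
    (G : C(Z, ℝ)) : (Λ ^ n)⁻¹ • (L ^ n) (h * G) = h * (Lt ^ n) G := by
  have hconj : SemiconjBy (ContinuousLinearMap.mul ℝ C(Z, ℝ) h) (Λ • Lt) L :=
    ContinuousLinearMap.ext fun G ↦ by
      simp [mul_apply_eq_comp, map_mul_eq_smul_mul_normalized hΛ hh hLt G]
  have hG := congr($(hconj.pow_right n) G)
  simp only [smul_pow, mul_apply_eq_comp, ContinuousLinearMap.mul_apply',
    smul_apply, mul_smul_comm] at hG
  rw [← hG, inv_smul_smul₀ (pow_ne_zero n hΛ)]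

end Normalization

theorem ruelle_operator_convergence_general
    {Z : Type*} [MetricSpace Z] [CompactSpace Z] [Nonempty Z]
    [MeasurableSpace Z] [BorelSpace Z]
    (L Lt : C(Z, ℝ) →L[ℝ] C(Z, ℝ))
    (hpos : ∀ G : C(Z, ℝ), (∀ z, 0 ≤ G z) → ∀ z, 0 ≤ (L G) z)
    (Λ : ℝ) (hΛ : 0 < Λ)
    (h : C(Z, ℝ)) (hh : ∀ z, 0 < h z)
    (hLt : ∀ (G : C(Z, ℝ)) (z : Z), Lt G z = Λ⁻¹ * ((L (h * G)) z / h z))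
    (hLt1 : Lt 1 = 1)
    (c : C(Z, ℝ) → ℝ)
    (hconv : ∀ G : C(Z, ℝ),
      Tendsto (fun n : ℕ => (Lt ^ n) G) atTop (𝓝 (ContinuousMap.const Z (c G)))) :
    ∃ μ₀ : ProbabilityMeasure Z,
      (∀ G : C(Z, ℝ),
        ∫ z, (Lt G) z ∂(μ₀ : Measure Z) = ∫ z, G z ∂(μ₀ : Measure Z)) ∧
      (∀ μ₁ : ProbabilityMeasure Z,
        (∀ G : C(Z, ℝ),
          ∫ z, (Lt G) z ∂(μ₁ : Measure Z) = ∫ z, G z ∂(μ₁ : Measure Z)) → μ₁ = μ₀) ∧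
      (∀ g gd : C(Z, ℝ), (∀ z, gd z = g z / h z) →
        Tendsto (fun n : ℕ => (Λ ^ n)⁻¹ • ((L ^ n) g)) atTop
          (𝓝 ((∫ z, gd z ∂(μ₀ : Measure Z)) • h))) := by
  obtain ⟨μ₀, hμ₀⟩ := exists_probabilityMeasure_integral_eq_of_tendsto_iterate hconv
    (fun _ ↦ normalized_nonneg hpos hΛ hh hLt) hLt1
  have hfix (G : C(Z, ℝ)) : ∫ z, Lt G z ∂(μ₀ : Measure Z) = ∫ z, G z ∂(μ₀ : Measure Z) := by
    rw [hμ₀, hμ₀, apply_map_eq_of_tendsto_iterate hconv]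
  refine ⟨μ₀, hfix, fun μ₁ hμ₁ ↦ ?_, fun g gd hgd ↦ ?_⟩
  · exact ProbabilityMeasure.ext_of_forall_integral_continuousMap_eq fun G ↦
      (integral_eq_of_tendsto_iterate_of_integral_map_eq hconv hμ₁ G).trans (hμ₀ G).symm
  · have hg : g = h * gd := by
      ext z
      rw [ContinuousMap.mul_apply, hgd, mul_div_cancel₀ _ (hh z).ne']
    simp only [hg, inv_pow_smul_pow_apply_mul hΛ.ne' (fun z ↦ (hh z).ne') hLt, hμ₀]
    convert (tendsto_const_nhds (x := h)).mul (hconv gd) using 2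
    ext z
    simp [mul_comm]

/-- Let `L` be a positive bounded linear operator on `C(Z,ℝ)` with
positive maximal eigenvalue `Λ` and strictly positive eigenfunction `h`, and suppose
the normalized operator `Lt G = Λ⁻¹ h⁻¹ L(h G)` (with `Lt 1 = 1`) satisfies
`Ltⁿ G → c(G) · 1` uniformly for all continuous `G`. Then there is a unique Borel
probability measure `μ₀` with `Lt* μ₀ = μ₀`, and for every `g ∈ C(Z,ℝ)` the sequence
`Λ^{−n} Lⁿ g` converges uniformly to `h · ∫ (g/h) dμ₀`. -/
theorem ruelle_operator_convergence
    {Z : Type*} [MetricSpace Z] [CompactSpace Z] [Nonempty Z]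
    [MeasurableSpace Z] [BorelSpace Z]
    (L Lt : C(Z, ℝ) →L[ℝ] C(Z, ℝ))
    (hpos : ∀ G : C(Z, ℝ), (∀ z, 0 ≤ G z) → ∀ z, 0 ≤ (L G) z)
    (Λ : ℝ) (hΛ : 0 < Λ)
    (h : C(Z, ℝ)) (hh : ∀ z, 0 < h z) (heig : L h = Λ • h)
    (hLt : ∀ (G : C(Z, ℝ)) (z : Z), Lt G z = Λ⁻¹ * ((L (h * G)) z / h z))
    (hLt1 : Lt 1 = 1)
    (c : C(Z, ℝ) → ℝ)
    (hconv : ∀ G : C(Z, ℝ),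
      Tendsto (fun n : ℕ => (Lt ^ n) G) atTop (𝓝 (ContinuousMap.const Z (c G)))) :
    ∃ μ₀ : ProbabilityMeasure Z,
      (∀ G : C(Z, ℝ),
        ∫ z, (Lt G) z ∂(μ₀ : Measure Z) = ∫ z, G z ∂(μ₀ : Measure Z)) ∧
      (∀ μ₁ : ProbabilityMeasure Z,
        (∀ G : C(Z, ℝ),
          ∫ z, (Lt G) z ∂(μ₁ : Measure Z) = ∫ z, G z ∂(μ₁ : Measure Z)) → μ₁ = μ₀) ∧
      (∀ g gd : C(Z, ℝ), (∀ z, gd z = g z / h z) →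
        Tendsto (fun n : ℕ => (Λ ^ n)⁻¹ • ((L ^ n) g)) atTop
          (𝓝 ((∫ z, gd z ∂(μ₀ : Measure Z)) • h))) :=
  ruelle_operator_convergence_general L Lt hpos Λ hΛ h hh hLt hLt1 c hconv
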